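/- Fix an integer N ≥ 2, α ∈ (0,1), λ ∈ [0,1], and suppose κ := ⌈(1-α)N⌉ satisfies κ ≤ N-1. Let V : ℝ^n → (Fin N → ℝ), x̄ ∈ ℝ^n, and g : Fin N → ℝ^n satisfy V_i(x) ≥ V_i(x̄) + ⟨g_i, x - x̄⟩ for all x ∈ ℝ^n and all i. Let σ be a permutation of {1,…,N} with V_{σ(1)}(x̄) ≤ … ≤ V_{σ(N)}(x̄), and define the cut s(x) := Σ_{i=1}^N 𝔮_i · ( V_{σ(i)}(x̄) + ⟨g_{σ(i)}, x - x̄⟩ ). Then s(x̄) = ρ_{λ,α}(V(x̄)) and s(x) ≤ ρ_{λ,α}(V(x)) for all x ∈ ℝ^n; i.e., s is an affine minorant of x ↦ ρ_{λ,α}(V(x)) exact at x̄ (the cut generated in the backward step of the risk averse SDDP algorithm is valid and tight at the trial point). -/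

import Mathlib

/-! The weights `𝔮ᵢ` are `ζ_{σ(i)} / N` for the density `ζ = (1-λ) + λη` of `𝔄`, where `η` puts
mass `0` on the `κ - 1` smallest values of `V(x̄)`, `1/α` on the `N - κ` largest ones, and the
remainder on the `κ`-th one. Every `ζ ∈ 𝔄` gives the lower bound `E_ζ[Z] ≤ ρ(Z)`, so by the
subgradient inequality the cut `s(x) ≤ E_ζ[V(x)] ≤ ρ(V(x))`. At `x̄` the density `η` satisfies
complementary slackness with `u = V_{σ(κ)}(x̄)` in the infimum defining `AV@R_α`, so equality
holds there. -/

/-- Average Value at Risk: `AV@R_α(Z) = inf_u ( u + 1/(αN) Σᵢ max(Zᵢ - u, 0) )`. -/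
noncomputable def avar (N : ℕ) (α : ℝ) (Z : Fin N → ℝ) : ℝ :=
  ⨅ u : ℝ, (u + 1 / (α * N) * ∑ i, max (Z i - u) 0)

/-- The risk measure `ρ_{λ,α}(Z) = (1-λ)·(1/N)ΣᵢZᵢ + λ·AV@R_α(Z)`. -/
noncomputable def rho (N : ℕ) (α lam : ℝ) (Z : Fin N → ℝ) : ℝ :=
  (1 - lam) * ((1 / N : ℝ) * ∑ i, Z i) + lam * avar N α Z

/-- `κ = ⌈(1-α)N⌉`. -/
noncomputable def kap (N : ℕ) (α : ℝ) : ℕ := ⌈(1 - α) * (N : ℝ)⌉₊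

/-- The `k`-th order statistic `Z₍ₖ₎` (1-indexed), given a sorting permutation `σ`. -/
noncomputable def sortedVal (N : ℕ) (Z : Fin N → ℝ) (σ : Equiv.Perm (Fin N)) (k : ℕ) : ℝ :=
  if h : k - 1 < N then Z (σ ⟨k - 1, h⟩) else 0

/-- The worst-case weights `𝔮ᵢ` (1-indexed). -/
noncomputable def qw (N : ℕ) (α lam : ℝ) (i : ℕ) : ℝ :=
  if i < kap N α then (1 - lam) / N
  else if i = kap N α then (1 - lam) / N + lam - lam * ((N : ℝ) - (kap N α : ℝ)) / (α * N)
  else (1 - lam) / N + lam / (α * N)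

/-- The dual set `𝔄_α` of densities for `AV@R_α`. -/
def Aalpha (N : ℕ) (α : ℝ) : Set (Fin N → ℝ) :=
  {η | (∀ i, 0 ≤ η i ∧ η i ≤ 1 / α) ∧ (1 / N : ℝ) * ∑ i, η i = 1}

/-- The dual set `𝔄 = (1-λ)·1 + λ·𝔄_α` of densities for `ρ_{λ,α}`. -/
def Aset (N : ℕ) (α lam : ℝ) : Set (Fin N → ℝ) :=
  {ζ | ∃ η ∈ Aalpha N α, ζ = fun i => (1 - lam) * 1 + lam * η i}

/-- Expectation `E_ζ[Z] = (1/N) Σᵢ ζᵢ Zᵢ` with respect to density `ζ`. -/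
noncomputable def Eexp (N : ℕ) (ζ Z : Fin N → ℝ) : ℝ := (1 / N : ℝ) * ∑ i, ζ i * Z i

open Finset

noncomputable def avarObjective (N : ℕ) (α : ℝ) (Z : Fin N → ℝ) (u : ℝ) : ℝ :=
  u + 1 / (α * N) * ∑ i, max (Z i - u) 0

lemma mul_le_mul_max_zero {η c t : ℝ} (h0 : 0 ≤ η) (hc : η ≤ c) : η * t ≤ c * max t 0 := by
  rcases le_total 0 t with ht | ht
  · rw [max_eq_left ht]; exact mul_le_mul_of_nonneg_right hc ht
  · rw [max_eq_right ht, mul_zero]; exact mul_nonpos_of_nonneg_of_nonpos h0 ht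

lemma mul_eq_mul_max_zero {η c t : ℝ} (hneg : t < 0 → η = 0) (hpos : 0 < t → η = c) :
    η * t = c * max t 0 := by
  rcases lt_trichotomy t 0 with ht | rfl | ht
  · simp [hneg ht, max_eq_right ht.le]
  · simp
  · simp [hpos ht, max_eq_left ht.le]

section AVaR

variable {N : ℕ} {α lam : ℝ} {η Z : Fin N → ℝ}

lemma Eexp_eq_add_Eexp_sub (hη : (1 / N : ℝ) * ∑ i, η i = 1) (u : ℝ) :
    Eexp N η Z = u + Eexp N η (fun i => Z i - u) := by
  simp only [Eexp, mul_sub, sum_sub_distrib, ← sum_mul]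
  linear_combination u * hη

lemma Eexp_le_avarObjective (hα : 0 < α) (hη : η ∈ Aalpha N α) (u : ℝ) :
    Eexp N η Z ≤ avarObjective N α Z u := by
  rw [Eexp_eq_add_Eexp_sub hη.2 u, avarObjective, add_le_add_iff_left, Eexp, mul_sum, mul_sum]
  refine sum_le_sum fun i _ => ?_
  calc 1 / N * (η i * (Z i - u)) ≤ 1 / N * (1 / α * max (Z i - u) 0) :=
        mul_le_mul_of_nonneg_left (mul_le_mul_max_zero (hη.1 i).1 (hη.1 i).2) (by positivity)
    _ = 1 / (α * N) * max (Z i - u) 0 := by field_simp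

/-- Complementary slackness: `η` is an optimal dual density for the primal point `u`. -/
lemma Eexp_eq_avarObjective (hη : (1 / N : ℝ) * ∑ i, η i = 1) {u : ℝ}
    (hlow : ∀ i, Z i < u → η i = 0) (hhigh : ∀ i, u < Z i → η i = 1 / α) :
    Eexp N η Z = avarObjective N α Z u := by
  rw [Eexp_eq_add_Eexp_sub hη u, avarObjective, Eexp, mul_sum, mul_sum]
  congr 1
  refine sum_congr rfl fun i _ => ?_
  rw [mul_eq_mul_max_zero (fun h => hlow i (sub_neg.mp h)) (fun h => hhigh i (sub_pos.mp h))]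
  field_simp

lemma Eexp_le_avar (hα : 0 < α) (hη : η ∈ Aalpha N α) : Eexp N η Z ≤ avar N α Z :=
  le_ciInf (Eexp_le_avarObjective hα hη)

lemma avar_eq_Eexp (hα : 0 < α) (hη : η ∈ Aalpha N α) {u : ℝ} (hlow : ∀ i, Z i < u → η i = 0)
    (hhigh : ∀ i, u < Z i → η i = 1 / α) : avar N α Z = Eexp N η Z :=
  le_antisymm
    ((ciInf_le ⟨Eexp N η Z, by rintro _ ⟨v, rfl⟩; exact Eexp_le_avarObjective hα hη v⟩ u).trans
      (Eexp_eq_avarObjective hη.2 hlow hhigh).ge)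
    (Eexp_le_avar hα hη)

lemma Eexp_mix (η Z : Fin N → ℝ) :
    Eexp N (fun i => (1 - lam) * 1 + lam * η i) Z
      = (1 - lam) * ((1 / N : ℝ) * ∑ i, Z i) + lam * Eexp N η Z := by
  simp only [Eexp, add_mul, sum_add_distrib, mul_assoc, ← mul_sum, one_mul]
  ring

lemma Eexp_le_rho (hα : 0 < α) (hlam : 0 ≤ lam) {ζ : Fin N → ℝ} (hζ : ζ ∈ Aset N α lam) :
    Eexp N ζ Z ≤ rho N α lam Z := by
  obtain ⟨η, hη, rfl⟩ := hζ
  rw [Eexp_mix, rho]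
  gcongr
  exact Eexp_le_avar hα hη

end AVaR

section WorstCaseDensity

variable {N : ℕ} {α : ℝ}

lemma kap_le (hα : 0 ≤ α) : kap N α ≤ N :=
  Nat.ceil_le.mpr (by nlinarith [(N.cast_nonneg : (0 : ℝ) ≤ N)])

lemma one_le_kap (hN : 0 < N) (hα : α < 1) : 1 ≤ kap N α :=
  Nat.ceil_pos.mpr (mul_pos (sub_pos.mpr hα) (Nat.cast_pos.mpr hN))

/-- Indexed by the 1-based rank `k`, like `qw`. -/
noncomputable def avarDensity (N : ℕ) (α : ℝ) (k : ℕ) : ℝ :=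
  if k < kap N α then 0
  else if k = kap N α then N - (N - kap N α) / α
  else 1 / α

lemma qw_eq (hN : N ≠ 0) (hα : α ≠ 0) (lam : ℝ) (k : ℕ) :
    qw N α lam k = ((1 - lam) * 1 + lam * avarDensity N α k) / N := by
  have : (N : ℝ) ≠ 0 := Nat.cast_ne_zero.mpr hN
  unfold qw avarDensity
  split_ifs <;> field_simp <;> ring

lemma avarDensity_bounds (hα0 : 0 < α) (hα1 : α ≤ 1) (k : ℕ) :
    0 ≤ avarDensity N α k ∧ avarDensity N α k ≤ 1 / α := by
  have hlo : (1 - α) * N ≤ kap N α := Nat.le_ceil _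
  have hhi : (kap N α : ℝ) < (1 - α) * N + 1 :=
    Nat.ceil_lt_add_one (mul_nonneg (sub_nonneg.mpr hα1) N.cast_nonneg)
  unfold avarDensity
  split_ifs
  · exact ⟨le_rfl, by positivity⟩
  · have : (N : ℝ) - (N - kap N α) / α = (kap N α - (1 - α) * N) / α := by field_simp; ring
    rw [this]
    exact ⟨div_nonneg (by linarith) hα0.le, div_le_div_of_nonneg_right (by linarith) hα0.le⟩
  · exact ⟨by positivity, le_rfl⟩

lemma qw_nonneg (hN : N ≠ 0) (hα0 : 0 < α) (hα1 : α ≤ 1) {lam : ℝ} (hlam0 : 0 ≤ lam)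
    (hlam1 : lam ≤ 1) (k : ℕ) : 0 ≤ qw N α lam k := by
  rw [qw_eq hN hα0.ne']
  have := (avarDensity_bounds (N := N) hα0 hα1 k).1
  have := sub_nonneg.mpr hlam1
  positivity

lemma sum_avarDensity (hK1 : 1 ≤ kap N α) (hKN : kap N α ≤ N) :
    ∑ i : Fin N, avarDensity N α (i + 1) = N := by
  obtain ⟨K', hK'⟩ : ∃ K', kap N α = K' + 1 := ⟨kap N α - 1, by omega⟩
  have hlow : ∑ i ∈ range K', avarDensity N α (i + 1) = 0 :=
    sum_eq_zero fun i hi => if_pos (by simp at hi; omega)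
  have hmid : avarDensity N α (K' + 1) = N - (N - kap N α) / α := by
    rw [avarDensity, if_neg (by omega), if_pos hK'.symm]
  have hhigh : ∑ i ∈ Ico (kap N α) N, avarDensity N α (i + 1) = (N - kap N α) / α := by
    have h (i) (hi : i ∈ Ico (kap N α) N) : avarDensity N α (i + 1) = 1 / α := by
      rw [mem_Ico] at hi
      rw [avarDensity, if_neg (by omega), if_neg (by omega)]
    rw [sum_congr rfl h, sum_const, Nat.card_Ico, nsmul_eq_mul, Nat.cast_sub hKN]
    ring
  rw [Fin.sum_univ_eq_sum_range (fun i => avarDensity N α (i + 1)),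
    ← sum_range_add_sum_Ico _ hKN, hhigh, hK', sum_range_succ, hlow, hmid, hK']
  ring

noncomputable def sortedDensity (N : ℕ) (α : ℝ) (σ : Equiv.Perm (Fin N)) (j : Fin N) : ℝ :=
  avarDensity N α ((σ.symm j : ℕ) + 1)

lemma sortedDensity_mem_Aalpha (hN : 0 < N) (hα0 : 0 < α) (hα1 : α < 1)
    (σ : Equiv.Perm (Fin N)) : sortedDensity N α σ ∈ Aalpha N α := by
  refine ⟨fun j => avarDensity_bounds hα0 hα1.le _, ?_⟩
  unfold sortedDensity
  rw [Equiv.sum_comp σ.symm (fun i => avarDensity N α ((i : ℕ) + 1)),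
    sum_avarDensity (one_le_kap hN hα1) (kap_le hα0.le)]
  field_simp

lemma avar_eq_Eexp_sortedDensity (hN : 0 < N) (hα0 : 0 < α) (hα1 : α < 1)
    {Z : Fin N → ℝ} {σ : Equiv.Perm (Fin N)} (hσ : Monotone fun i => Z (σ i)) :
    avar N α Z = Eexp N (sortedDensity N α σ) Z := by
  have hK : kap N α - 1 < N := by have := kap_le (N := N) hα0.le; omega
  refine avar_eq_Eexp hα0 (sortedDensity_mem_Aalpha hN hα0 hα1 σ)
    (u := Z (σ ⟨kap N α - 1, hK⟩)) (fun j hj => ?_) (fun j hj => ?_)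
  · obtain ⟨i, rfl⟩ := σ.surjective j
    have : (i : ℕ) < kap N α - 1 := by
      by_contra! h; exact hj.not_ge (hσ (Fin.le_def.mpr h))
    simp only [sortedDensity, Equiv.symm_apply_apply, avarDensity]
    rw [if_pos (by omega)]
  · obtain ⟨i, rfl⟩ := σ.surjective j
    have : kap N α - 1 < (i : ℕ) := by
      by_contra! h; exact hj.not_ge (hσ (Fin.le_def.mpr h))
    simp only [sortedDensity, Equiv.symm_apply_apply, avarDensity]
    rw [if_neg (by omega), if_neg (by omega)]

lemma sum_qw_mul_eq_Eexp (hN : N ≠ 0) (hα : α ≠ 0) (lam : ℝ)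
    (σ : Equiv.Perm (Fin N)) (W : Fin N → ℝ) :
    ∑ i : Fin N, qw N α lam (i + 1) * W (σ i)
      = Eexp N (fun j => (1 - lam) * 1 + lam * sortedDensity N α σ j) W := by
  rw [Eexp, mul_sum, ← Equiv.sum_comp σ (fun j => 1 / (N : ℝ) * (_ * W j))]
  refine sum_congr rfl fun i _ => ?_
  rw [qw_eq hN hα, sortedDensity, Equiv.symm_apply_apply]
  ring

end WorstCaseDensity

theorem sddp_cut_valid_and_tight_general (n N : ℕ) (hN : 2 ≤ N) (α lam : ℝ)
    (hα0 : 0 < α) (hα1 : α < 1) (hlam0 : 0 ≤ lam) (hlam1 : lam ≤ 1)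
    (V : EuclideanSpace ℝ (Fin n) → Fin N → ℝ)
    (xb : EuclideanSpace ℝ (Fin n)) (g : Fin N → EuclideanSpace ℝ (Fin n))
    (hsub : ∀ (x : EuclideanSpace ℝ (Fin n)) (i : Fin N),
      V xb i + (inner ℝ (g i) (x - xb) : ℝ) ≤ V x i)
    (σ : Equiv.Perm (Fin N)) (hσ : Monotone fun i => V xb (σ i)) :
    (∑ i : Fin N, qw N α lam (i.1 + 1) * (V xb (σ i) + (inner ℝ (g (σ i)) (xb - xb) : ℝ)))
        = rho N α lam (V xb) ∧
    ∀ x : EuclideanSpace ℝ (Fin n),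
      (∑ i : Fin N, qw N α lam (i.1 + 1) * (V xb (σ i) + (inner ℝ (g (σ i)) (x - xb) : ℝ)))
        ≤ rho N α lam (V x) := by
  have hN0 : 0 < N := by omega
  have hη := sortedDensity_mem_Aalpha hN0 hα0 hα1 σ
  refine ⟨?_, fun x => ?_⟩
  · simp only [sub_self, inner_zero_right, add_zero]
    rw [sum_qw_mul_eq_Eexp hN0.ne' hα0.ne', Eexp_mix, rho,
      avar_eq_Eexp_sortedDensity hN0 hα0 hα1 hσ]
  · calc _ ≤ ∑ i : Fin N, qw N α lam (i + 1) * V x (σ i) :=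
          sum_le_sum fun i _ => mul_le_mul_of_nonneg_left (hsub x (σ i))
            (qw_nonneg hN0.ne' hα0 hα1.le hlam0 hlam1 _)
      _ = _ := sum_qw_mul_eq_Eexp hN0.ne' hα0.ne' lam σ (V x)
      _ ≤ _ := Eexp_le_rho hα0 hlam0 ⟨_, hη, rfl⟩

/-- validity and tightness of the SDDP cut. If `κ = ⌈(1-α)N⌉ ≤ N-1`,
`gᵢ` is a subgradient of `Vᵢ` at `x̄`, and `σ` sorts the values `V_{σ(1)}(x̄) ≤ … ≤ V_{σ(N)}(x̄)`,
then the cut `s(x) = Σᵢ 𝔮ᵢ (V_{σ(i)}(x̄) + ⟨g_{σ(i)}, x - x̄⟩)` satisfies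
`s(x̄) = ρ_{λ,α}(V(x̄))` and `s(x) ≤ ρ_{λ,α}(V(x))` for all `x`. -/
theorem sddp_cut_valid_and_tight (n N : ℕ) (hN : 2 ≤ N) (α lam : ℝ)
    (hα0 : 0 < α) (hα1 : α < 1) (hlam0 : 0 ≤ lam) (hlam1 : lam ≤ 1)
    (hκ : kap N α ≤ N - 1)
    (V : EuclideanSpace ℝ (Fin n) → Fin N → ℝ)
    (xb : EuclideanSpace ℝ (Fin n)) (g : Fin N → EuclideanSpace ℝ (Fin n))
    (hsub : ∀ (x : EuclideanSpace ℝ (Fin n)) (i : Fin N),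
      V xb i + (inner ℝ (g i) (x - xb) : ℝ) ≤ V x i)
    (σ : Equiv.Perm (Fin N)) (hσ : Monotone fun i => V xb (σ i)) :
    (∑ i : Fin N, qw N α lam (i.1 + 1) * (V xb (σ i) + (inner ℝ (g (σ i)) (xb - xb) : ℝ)))
        = rho N α lam (V xb) ∧
    ∀ x : EuclideanSpace ℝ (Fin n),
      (∑ i : Fin N, qw N α lam (i.1 + 1) * (V xb (σ i) + (inner ℝ (g (σ i)) (x - xb) : ℝ)))
        ≤ rho N α lam (V x) :=
  sddp_cut_valid_and_tight_general n N hN α lam hα0 hα1 hlam0 hlam1 V xb g hsub σ hσ
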